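/- Let A : ℝ^{n₁×n₂} → ℝ^{n₃} be a linear map that is (ε, 2k)-RIP with ε < 1. Suppose Z* ∈ ℝ^{n₁×n₂} satisfies b = A(Z*), Z*(1,:) = Z*(2,:), Z*(n₁−1,:) = Z*(n₁,:), 0 < s(Z*) ≤ k, and rank(Z*) = 1. Then Z* minimizes the row-difference sparsity among all rank-one feasible points: for every Z ∈ ℝ^{n₁×n₂} with b = A(Z), rank(Z) = 1, Z(1,:) = Z(2,:), Z(n₁−1,:) = Z(n₁,:), and s(Z) > 0, one has s(Z) ≥ s(Z*). -/

import Mathlib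

/-- Row-difference sparsity: the number of indices `i ∈ {0,…,n₁−2}` such that
row `i` of `Z` differs from row `i+1` of `Z`. -/
noncomputable def rowDiffSparsity {n₁ n₂ : ℕ} (Z : Matrix (Fin n₁) (Fin n₂) ℝ) : ℕ :=
  (Finset.univ.filter fun i : Fin (n₁ - 1) =>
    Z ⟨i.1, by have := i.2; omega⟩ ≠ Z ⟨i.1 + 1, by have := i.2; omega⟩).card

/-- Boundary conditions: the first two rows of `Z` are equal and the
last two rows of `Z` are equal. -/
def boundaryRows {n₁ n₂ : ℕ} (hn : 2 ≤ n₁) (Z : Matrix (Fin n₁) (Fin n₂) ℝ) : Prop :=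
  Z ⟨0, by omega⟩ = Z ⟨1, by omega⟩ ∧ Z ⟨n₁ - 2, by omega⟩ = Z ⟨n₁ - 1, by omega⟩

/-- `(ε, k)`-RIP: for every nonzero `Z` satisfying the boundary conditions and
`0 < s(Z) ≤ k`, we have `| ‖A(Z)‖₂² / ‖Z‖_F² − 1 | < ε`. -/
def IsRIP {n₁ n₂ n₃ : ℕ} (hn : 2 ≤ n₁) (ε : ℝ) (k : ℕ)
    (A : Matrix (Fin n₁) (Fin n₂) ℝ →ₗ[ℝ] (Fin n₃ → ℝ)) : Prop :=
  ∀ Z : Matrix (Fin n₁) (Fin n₂) ℝ, Z ≠ 0 → boundaryRows hn Z →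
    0 < rowDiffSparsity Z → rowDiffSparsity Z ≤ k →
    |(∑ j, (A Z j) ^ 2) / (∑ i, ∑ j, (Z i j) ^ 2) - 1| < ε

/-
The difference `W = Z* - Z` of two feasible points lies in the kernel of `A`, satisfies the
boundary conditions, and has `s(W) ≤ s(Z*) + s(Z) ≤ 2k` whenever `s(Z) < s(Z*)`. If `s(W) > 0`,
the `(ε, 2k)`-RIP with `ε < 1` forbids `A W = 0`; if `s(W) = 0`, all rows of `W` are equal, so
`Z*` and `Z` change rows at the same indices and `s(Z) = s(Z*)`.
-/

section RowDifferences

variable {n₁ n₂ : ℕ}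

theorem rowDiffSparsity_sub_le (X Y : Matrix (Fin n₁) (Fin n₂) ℝ) :
    rowDiffSparsity (X - Y) ≤ rowDiffSparsity X + rowDiffSparsity Y := by
  unfold rowDiffSparsity
  refine (Finset.card_le_card fun i => ?_).trans (Finset.card_union_le _ _)
  simp only [Finset.mem_filter, Finset.mem_union, Finset.mem_univ, true_and]
  contrapose!
  rintro ⟨hX, hY⟩
  exact congrArg₂ (· - ·) hX hY

theorem rowDiffSparsity_eq_of_rowDiffSparsity_sub_eq_zero {X Y : Matrix (Fin n₁) (Fin n₂) ℝ}
    (h : rowDiffSparsity (X - Y) = 0) : rowDiffSparsity X = rowDiffSparsity Y := by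
  unfold rowDiffSparsity at h ⊢
  rw [Finset.card_eq_zero, Finset.filter_eq_empty_iff] at h
  congr 1
  refine Finset.filter_congr fun i _ => not_congr ?_
  have hi : X _ - Y _ = X _ - Y _ := not_not.mp (h (Finset.mem_univ i))
  rw [sub_eq_sub_iff_sub_eq_sub] at hi
  rw [← sub_eq_zero, hi, sub_eq_zero]

theorem boundaryRows.sub {hn : 2 ≤ n₁} {X Y : Matrix (Fin n₁) (Fin n₂) ℝ}
    (hX : boundaryRows hn X) (hY : boundaryRows hn Y) : boundaryRows hn (X - Y) :=
  ⟨congrArg₂ (· - ·) hX.1 hY.1, congrArg₂ (· - ·) hX.2 hY.2⟩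

theorem ne_zero_of_rowDiffSparsity_pos {Z : Matrix (Fin n₁) (Fin n₂) ℝ}
    (h : 0 < rowDiffSparsity Z) : Z ≠ 0 := by
  rintro rfl
  obtain ⟨i, hi⟩ := Finset.card_pos.mp h
  exact (Finset.mem_filter.mp hi).2 rfl

end RowDifferences

theorem IsRIP.map_ne_zero {n₁ n₂ n₃ k : ℕ} {hn : 2 ≤ n₁} {ε : ℝ}
    {A : Matrix (Fin n₁) (Fin n₂) ℝ →ₗ[ℝ] (Fin n₃ → ℝ)} (hA : IsRIP hn ε k A) (hε : ε ≤ 1)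
    {Z : Matrix (Fin n₁) (Fin n₂) ℝ} (hZ : boundaryRows hn Z) (hpos : 0 < rowDiffSparsity Z)
    (hk : rowDiffSparsity Z ≤ k) : A Z ≠ 0 := by
  intro hAZ
  have := hA Z (ne_zero_of_rowDiffSparsity_pos hpos) hZ hpos hk
  simp only [hAZ, Pi.zero_apply, ne_eq, OfNat.ofNat_ne_zero, not_false_eq_true, zero_pow,
    Finset.sum_const_zero, zero_div, zero_sub, abs_neg, abs_one] at this
  linarith

theorem recoverability_general {n₁ n₂ n₃ k : ℕ} (hn : 2 ≤ n₁) {ε : ℝ} (hε : ε < 1)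
    (A : Matrix (Fin n₁) (Fin n₂) ℝ →ₗ[ℝ] (Fin n₃ → ℝ))
    (hA : IsRIP hn ε (2 * k) A)
    (b : Fin n₃ → ℝ) (Zstar : Matrix (Fin n₁) (Fin n₂) ℝ)
    (hZb : b = A Zstar) (hZbd : boundaryRows hn Zstar)
    (hZk : rowDiffSparsity Zstar ≤ k) :
    ∀ Z : Matrix (Fin n₁) (Fin n₂) ℝ,
      b = A Z → Z.rank = 1 → boundaryRows hn Z → 0 < rowDiffSparsity Z →
      rowDiffSparsity Zstar ≤ rowDiffSparsity Z := by
  intro Z hZb' _ hZbd' _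
  by_contra! hlt
  have hAW : A (Zstar - Z) = 0 := by rw [map_sub, ← hZb, ← hZb', sub_self]
  rcases Nat.eq_zero_or_pos (rowDiffSparsity (Zstar - Z)) with hW | hW
  · exact hlt.ne' (rowDiffSparsity_eq_of_rowDiffSparsity_sub_eq_zero hW)
  · refine hA.map_ne_zero hε.le (hZbd.sub hZbd') hW ?_ hAW
    have := rowDiffSparsity_sub_le Zstar Z
    omega

/-- Corollary (Recoverability): if `A` is `(ε, 2k)`-RIP with `ε < 1` and `Z*` is
a rank-one feasible point with `0 < s(Z*) ≤ k`, then `Z*` minimizes the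
row-difference sparsity among all rank-one feasible points with positive
row-difference sparsity. -/
theorem recoverability {n₁ n₂ n₃ k : ℕ} (hn : 2 ≤ n₁) {ε : ℝ} (hε : ε < 1)
    (A : Matrix (Fin n₁) (Fin n₂) ℝ →ₗ[ℝ] (Fin n₃ → ℝ))
    (hA : IsRIP hn ε (2 * k) A)
    (b : Fin n₃ → ℝ) (Zstar : Matrix (Fin n₁) (Fin n₂) ℝ)
    (hZb : b = A Zstar) (hZbd : boundaryRows hn Zstar)
    (hZpos : 0 < rowDiffSparsity Zstar) (hZk : rowDiffSparsity Zstar ≤ k)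
    (hZrank : Zstar.rank = 1) :
    ∀ Z : Matrix (Fin n₁) (Fin n₂) ℝ,
      b = A Z → Z.rank = 1 → boundaryRows hn Z → 0 < rowDiffSparsity Z →
      rowDiffSparsity Zstar ≤ rowDiffSparsity Z :=
  recoverability_general hn hε A hA b Zstar hZb hZbd hZk
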